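/- Let C(z) satisfy C(z) = 1 + 2z C(z) + z² C(z)². Then for all n ≥ 2 and non-negative integers t, the coefficient of z^n in zC(z)·((zC(z))^t − (z/(1−z))^t)/(1+zC(z))² equals C(2n-3, n-t-1) − C(2n-3, n-t-2) − C(n-2, t-1). -/

import Mathlib

/-!
Put `B = 1 + zC`. The defining equation says `C = B²`, hence `B = 1 + zB²`: `B` is the Catalan
series and `zC/(1 + zC)² = z`. The coefficient therefore splits as
`[z^(n-1-t)] B^(2t) − [z^(n-1-t)] (1 − z)^(-t)`. The first is a ballot number, obtained from the
recursion `B^(k+1) = B^k + z B^(k+2)`; the second is `C(n-2, t-1)`.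
-/

/-- Binomial coefficient `C(a,b)` for integers `a`, `b`, with the convention that it
vanishes when `b < 0` or `b > a`. -/
def zchoose (a b : ℤ) : ℤ :=
  if 0 ≤ b ∧ b ≤ a then (a.toNat).choose b.toNat else 0

open PowerSeries

theorem zchoose_natCast (n k : ℕ) : zchoose n k = n.choose k := by
  unfold zchoose
  split_ifs with h
  · simp
  · rw [Nat.choose_eq_zero_of_lt (by omega), Nat.cast_zero]

theorem zchoose_of_neg {a b : ℤ} (hb : b < 0) : zchoose a b = 0 :=
  if_neg (by omega)

theorem zchoose_of_lt {a b : ℤ} (h : a < b) : zchoose a b = 0 :=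
  if_neg (by omega)

theorem zchoose_symm (a b : ℤ) : zchoose a (a - b) = zchoose a b := by
  unfold zchoose
  by_cases h : 0 ≤ b ∧ b ≤ a
  · rw [if_pos (by omega), if_pos h, show (a - b).toNat = a.toNat - b.toNat by omega,
      Nat.choose_symm (by omega)]
  · rw [if_neg (by omega), if_neg h]

theorem zchoose_add_one_add_one {a : ℤ} (ha : 0 ≤ a) (b : ℤ) :
    zchoose (a + 1) (b + 1) = zchoose a b + zchoose a (b + 1) := by
  lift a to ℕ using ha
  rcases lt_trichotomy b (-1) with hb | rfl | hb
  · rw [zchoose_of_neg (by omega), zchoose_of_neg (by omega), zchoose_of_neg (by omega), add_zero]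
  · simp [zchoose]
    omega
  · lift b to ℕ using (by omega)
    have h := zchoose_natCast (a + 1) (b + 1)
    push_cast at h
    rw [h, zchoose_natCast, ← Nat.cast_succ, zchoose_natCast]
    exact_mod_cast Nat.choose_succ_succ' a b

/-- `[z^m] B^k` for the Catalan series `B`, except at `k = m = 0`, where the formula gives `0`. -/
def ballot (k m : ℕ) : ℤ :=
  zchoose (2 * m + k - 1) m - zchoose (2 * m + k - 1) (m - 1)

theorem ballot_succ_zero (k : ℕ) : ballot (k + 1) 0 = 1 := by
  simp [ballot, zchoose]

theorem ballot_zero_succ (m : ℕ) : ballot 0 (m + 1) = 0 := by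
  have h := zchoose_symm (2 * m + 1 : ℤ) (m + 1)
  simp only [ballot]
  push_cast
  ring_nf at h ⊢
  rw [h, sub_self]

theorem ballot_succ_succ (k m : ℕ) :
    ballot (k + 1) (m + 1) = ballot k (m + 1) + ballot (k + 2) m := by
  have hN : (0 : ℤ) ≤ 2 * m + k + 1 := by positivity
  have p1 := zchoose_add_one_add_one hN m
  have p2 := zchoose_add_one_add_one hN (m - 1)
  simp only [ballot]
  push_cast
  ring_nf at p1 p2 ⊢
  linear_combination p1 - p2

theorem constantCoeff_eq_one_of_eq_one_add_X_mul {R : Type*} [CommRing R] {B F : R⟦X⟧}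
    (hB : B = 1 + X * F) : constantCoeff B = 1 := by
  simp [hB]

theorem coeff_pow_eq_ballot {R : Type*} [CommRing R] {B : R⟦X⟧} (hB : B = 1 + X * B ^ 2)
    {k m : ℕ} (hkm : k ≠ 0 ∨ m ≠ 0) : coeff m (B ^ k) = ballot k m := by
  induction m generalizing k with
  | zero =>
    obtain ⟨k, rfl⟩ := Nat.exists_eq_succ_of_ne_zero (hkm.resolve_right (by simp))
    rw [coeff_zero_eq_constantCoeff_apply, map_pow, constantCoeff_eq_one_of_eq_one_add_X_mul hB,
      one_pow, ballot_succ_zero, Int.cast_one]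
  | succ m ih =>
    induction k with
    | zero => simp [coeff_one, ballot_zero_succ]
    | succ k ihk =>
      have hpow : B ^ (k + 1) = B ^ k + X * B ^ (k + 2) :=
        calc B ^ (k + 1) = B ^ k * B := pow_succ B k
          _ = B ^ k * (1 + X * B ^ 2) := by rw [← hB]
          _ = B ^ k + X * B ^ (k + 2) := by ring
      rw [hpow, map_add, coeff_succ_X_mul, ihk (by simp), ih (by simp), ballot_succ_succ,
        Int.cast_add]

theorem coeff_X_pow_mul_pow_two_mul {R : Type*} [CommRing R] {B : R⟦X⟧}
    (hB : B = 1 + X * B ^ 2) {m : ℕ} (hm : m ≠ 0) (t : ℕ) :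
    coeff m (X ^ t * B ^ (2 * t)) =
      ((zchoose (2 * m - 1) (m - t) - zchoose (2 * m - 1) (m - t - 1) : ℤ) : R) := by
  rw [coeff_X_pow_mul']
  split_ifs with htm
  · rw [coeff_pow_eq_ballot hB (by omega), ballot, Nat.cast_sub htm]
    push_cast
    ring_nf
  · rw [zchoose_of_neg (by omega), zchoose_of_neg (by omega), sub_zero, Int.cast_zero]

theorem inv_one_sub_X_eq_mk_one {k : Type*} [Field k] : (1 - X : k⟦X⟧)⁻¹ = mk 1 := by
  rw [PowerSeries.inv_eq_iff_mul_eq_one (by simp)]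
  exact mk_one_mul_one_sub_eq_one k

theorem coeff_X_pow_mul_inv_one_sub_X_pow {k : Type*} [Field k] {m : ℕ} (hm : m ≠ 0) (t : ℕ) :
    coeff m (X ^ t * (1 - X : k⟦X⟧)⁻¹ ^ t) = (zchoose (m - 1) (t - 1) : k) := by
  rw [coeff_X_pow_mul', inv_one_sub_X_eq_mk_one]
  split_ifs with htm
  · cases t with
    | zero => simp [coeff_one, hm, zchoose_of_neg]
    | succ s =>
      rw [mk_one_pow_eq_mk_choose_add, coeff_mk, show s + (m - (s + 1)) = m - 1 by omega,
        show ((m : ℤ) - 1) = ((m - 1 : ℕ) : ℤ) by omega, Nat.cast_succ, add_sub_cancel_right,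
        zchoose_natCast, Int.cast_natCast]
  · rw [zchoose_of_lt (by omega), Int.cast_zero]

open PowerSeries in
/-- If `C(z)` is the formal power series with `C = 1 + 2zC + z²C²`, then for `n ≥ 2`
the coefficient of `z^n` in `zC·((zC)^t − (z/(1−z))^t)/(1+zC)²` equals
`C(2n-3,n-t-1) − C(2n-3,n-t-2) − C(n-2,t-1)`. -/
theorem coeff_motzkin_term2 (C : PowerSeries ℚ)
    (hC : C = 1 + 2 * X * C + X ^ 2 * C ^ 2) (n t : ℕ) (hn : 2 ≤ n) :
    PowerSeries.coeff n
        (X * C * ((X * C) ^ t - (X * (1 - X)⁻¹) ^ t) * ((1 + X * C) ^ 2)⁻¹) =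
      ((zchoose (2 * (n : ℤ) - 3) ((n : ℤ) - t - 1)
        - zchoose (2 * (n : ℤ) - 3) ((n : ℤ) - t - 2)
        - zchoose ((n : ℤ) - 2) ((t : ℤ) - 1) : ℤ) : ℚ) := by
  set B := 1 + X * C with hBC
  have hCB : C = B ^ 2 := by
    rw [hBC]
    nth_rewrite 1 [hC]
    ring
  have hB : B = 1 + X * B ^ 2 := by rw [← hCB]
  have hC0 : constantCoeff C ≠ 0 := by
    rw [hCB, map_pow, constantCoeff_eq_one_of_eq_one_add_X_mul hBC, one_pow]
    exact one_ne_zero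
  obtain ⟨m, rfl⟩ : ∃ m, n = m + 1 := ⟨n - 1, by omega⟩
  rw [← hCB, mul_right_comm, mul_assoc X, PowerSeries.mul_inv_cancel C hC0, mul_one,
    coeff_succ_X_mul, hCB, mul_pow, mul_pow, ← pow_mul, map_sub,
    coeff_X_pow_mul_pow_two_mul hB (by omega), coeff_X_pow_mul_inv_one_sub_X_pow (by omega)]
  push_cast
  ring_nf
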